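/- Let N ≥ 1, m, μ ∈ (0,1), W > M, M_N ≥ 0, Z_M = 2^N(1-m)^N, and W_w(n) = [(W-M)μ^n + (M_N/Z_M)·[n=N]]^{-1}. Then (2μ-1)·∑_{n=1}^N W_w(n) C(N-1,n-1)(1-m)^n m^{N-n} = ((2μ-1)(1-m)/((W-M)μ))·((1-m)/μ + m)^{N-1} - (2μ-1)(1-m)^N/((W-M)μ^N) + (2μ-1)(1-m)^N Z_M/((W-M)μ^N Z_M + M_N). -/

import Mathlib

open Finset in
/-- Closed form of the mean of an honest worker's weighted statistic under the
optimal weights `W_w(n) = [(W-M)μⁿ + (M_N/Z_M)[n=N]]⁻¹` with `Z_M = 2ᴺ(1-m)ᴺ`. -/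
theorem stmt13 (N : ℕ) (hN : 1 ≤ N) (m μ : ℝ) (hm : 0 < m) (hm1 : m < 1)
    (hμ : 0 < μ) (hμ1 : μ < 1) (W M MN : ℕ) (hMW : M < W) :
    (let ZM : ℝ := 2 ^ N * (1 - m) ^ N
     let Ww : ℕ → ℝ := fun n =>
      (((W : ℝ) - M) * μ ^ n + (if n = N then (MN : ℝ) / ZM else 0))⁻¹
     (2 * μ - 1) *
        ∑ n ∈ Finset.Icc 1 N,
          Ww n * ((N - 1).choose (n - 1) : ℝ) * (1 - m) ^ n * m ^ (N - n)
      = ((2 * μ - 1) * (1 - m) / (((W : ℝ) - M) * μ)) * ((1 - m) / μ + m) ^ (N - 1)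
        - (2 * μ - 1) * (1 - m) ^ N / (((W : ℝ) - M) * μ ^ N)
        + (2 * μ - 1) * (1 - m) ^ N * ZM / ((((W : ℝ) - M) * μ ^ N) * ZM + MN)) := by
  intro ZM Ww
  set c : ℝ := (W : ℝ) - M with hc_def
  have hc : (0:ℝ) < c := by
    have : (M:ℝ) < W := Nat.cast_lt.mpr hMW
    simp [hc_def]; linarith
  have hm' : (0:ℝ) < 1 - m := by linarith
  have hZM : (0:ℝ) < ZM := by
    have : ZM = 2 ^ N * (1 - m) ^ N := rfl
    rw [this]; positivity
  have hD : (0:ℝ) < c * μ ^ N * ZM + MN := by positivity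
  have hWwN : Ww N = ZM / (c * μ ^ N * ZM + MN) := by
    have : Ww N = (c * μ ^ N + (MN:ℝ) / ZM)⁻¹ := by simp [Ww, hc_def]
    rw [this, eq_div_iff hD.ne', inv_mul_eq_div, div_eq_iff]
    · field_simp
    · positivity
  have hWwn : ∀ n, n ≠ N → Ww n = (c * μ ^ n)⁻¹ := by
    intro n hn; simp [Ww, hn, hc_def]
  have hsplit : ∑ n ∈ Finset.Icc 1 N,
        Ww n * ((N - 1).choose (n - 1) : ℝ) * (1 - m) ^ n * m ^ (N - n)
      = (∑ n ∈ Finset.Icc 1 N,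
          (c * μ ^ n)⁻¹ * ((N - 1).choose (n - 1) : ℝ) * (1 - m) ^ n * m ^ (N - n))
        + (Ww N - (c * μ ^ N)⁻¹) * (1 - m) ^ N := by
    have hcongr : ∀ n ∈ Finset.Icc 1 N,
        Ww n * ((N - 1).choose (n - 1) : ℝ) * (1 - m) ^ n * m ^ (N - n)
        = (c * μ ^ n)⁻¹ * ((N - 1).choose (n - 1) : ℝ) * (1 - m) ^ n * m ^ (N - n)
          + (if n = N then (Ww N - (c * μ ^ N)⁻¹) * (1 - m) ^ N else 0) := by
      intro n hn
      by_cases h : n = N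
      · subst h
        simp [Nat.sub_self, Nat.choose_self]
        ring
      · rw [hWwn n h, if_neg h, add_zero]
    rw [Finset.sum_congr rfl hcongr, Finset.sum_add_distrib]
    congr 1
    rw [Finset.sum_ite_eq' (Finset.Icc 1 N) N (fun _ => (Ww N - (c * μ ^ N)⁻¹) * (1 - m) ^ N)]
    simp [hN]
  have hS1 : ∑ n ∈ Finset.Icc 1 N,
        (c * μ ^ n)⁻¹ * ((N - 1).choose (n - 1) : ℝ) * (1 - m) ^ n * m ^ (N - n)
      = (1 - m) / (c * μ) * ((1 - m) / μ + m) ^ (N - 1) := by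
    rw [show Finset.Icc 1 N = Finset.Ico 1 (N + 1) from by rw [Finset.Ico_add_one_right_eq_Icc],
      Finset.sum_Ico_eq_sum_range]
    have hrange : N + 1 - 1 = N := by omega
    rw [hrange, add_pow, Finset.mul_sum]
    have hr2 : N - 1 + 1 = N := by omega
    rw [hr2]
    refine Finset.sum_congr rfl ?_
    intro k hk
    have hk' : k < N := Finset.mem_range.mp hk
    have h1 : 1 + k - 1 = k := by omega
    have h2 : N - (1 + k) = N - 1 - k := by omega
    rw [h1, h2, div_pow]
    have hμk : μ ^ k ≠ 0 := pow_ne_zero _ hμ.ne'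
    field_simp
    ring
  rw [hsplit, hS1, hWwN]
  have hμN : μ ^ N ≠ 0 := pow_ne_zero _ hμ.ne'
  field_simp
  ring
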